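/- Let (F_n) be a linear-like semiring family of graphs, let G and H be simple graphs, and suppose there exists a graph homomorphism G + H → F_n. Then there exist k, ℓ ∈ ℕ with k + ℓ = n such that there exist graph homomorphisms G → F_k and H → F_ℓ. -/

import Mathlib

open SimpleGraph

universe u v

/-- The join `G + H` of two simple graphs. -/
def graphJoin {α : Type u} {β : Type v} (G : SimpleGraph α) (H : SimpleGraph β) :
    SimpleGraph (α ⊕ β) where
  Adj x y :=
    match x, y with
    | Sum.inl a, Sum.inl a' => G.Adj a a'
    | Sum.inr b, Sum.inr b' => H.Adj b b'
    | Sum.inl _, Sum.inr _ => True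
    | Sum.inr _, Sum.inl _ => True
  symm := by
    constructor
    rintro (a | b) (a' | b') h
    · exact G.adj_symm h
    · trivial
    · trivial
    · exact H.adj_symm h
  loopless := by
    constructor
    rintro (a | b) h
    · exact G.loopless.irrefl a h
    · exact H.loopless.irrefl b h

/-- The disjunctive product `G * H`. -/
def disjProd {α : Type u} {β : Type v} (G : SimpleGraph α) (H : SimpleGraph β) :
    SimpleGraph (α × β) where
  Adj p q := G.Adj p.1 q.1 ∨ H.Adj p.2 q.2
  symm := ⟨fun p q h => h.imp (fun h' => G.adj_symm h') (fun h' => H.adj_symm h')⟩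
  loopless := ⟨fun p h => h.elim (fun h' => G.loopless.irrefl p.1 h') (fun h' => H.loopless.irrefl p.2 h')⟩

/-- The lexicographic product `G ⋉ H`. -/
def lexProd {α : Type u} {β : Type v} (G : SimpleGraph α) (H : SimpleGraph β) :
    SimpleGraph (α × β) where
  Adj p q := G.Adj p.1 q.1 ∨ (p.1 = q.1 ∧ H.Adj p.2 q.2)
  symm := ⟨fun p q h => h.imp (fun h' => G.adj_symm h') (fun h' => ⟨h'.1.symm, H.adj_symm h'.2⟩)⟩
  loopless := ⟨fun p h => h.elim (fun h' => G.loopless.irrefl p.1 h') (fun h' => H.loopless.irrefl p.2 h'.2)⟩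

/-- The `d`-fold blowup `G ⋉ d`, i.e. the lexicographic product `G ⋉ K_d`. -/
def blowup {α : Type u} (G : SimpleGraph α) (d : ℕ) : SimpleGraph (α × Fin d) :=
  lexProd G (⊤ : SimpleGraph (Fin d))

/-- The `d`-fractionalization `G/d`: the graph of `d`-cliques of `G`, with two
`d`-cliques adjacent iff they are disjoint and pairwise adjacent. -/
def fracGraph {α : Type u} (G : SimpleGraph α) (d : ℕ) :
    SimpleGraph {S : Finset α // S.card = d ∧ G.IsClique (S : Set α)} where
  Adj S T := S ≠ T ∧ Disjoint S.val T.val ∧ ∀ a ∈ S.val, ∀ b ∈ T.val, G.Adj a b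
  symm := by
    constructor
    rintro S T ⟨hne, hd, hadj⟩
    exact ⟨hne.symm, hd.symm, fun b hb a ha => (hadj a ha b hb).symm⟩
  loopless := ⟨fun S h => h.1 rfl⟩

/-- The `n`-fold disjunctive power `G^{*n}`. -/
def disjPow {α : Type u} (G : SimpleGraph α) (n : ℕ) :
    SimpleGraph (Fin n → α) where
  Adj f g := ∃ i, G.Adj (f i) (g i)
  symm := ⟨fun f g ⟨i, h⟩ => ⟨i, h.symm⟩⟩
  loopless := ⟨fun f ⟨i, h⟩ => G.loopless.irrefl _ h⟩

/-- A semiring family of graphs. -/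
structure SemiringFamily where
  V : ℕ → Type u
  F : ∀ n, SimpleGraph (V n)
  isEmpty_zero : IsEmpty (V 0)
  nonempty_one : Nonempty (V 1)
  add_hom : ∀ n m : ℕ, Nonempty (graphJoin (F n) (F m) →g F (n + m))
  mul_hom : ∀ n m : ℕ, Nonempty (disjProd (F n) (F m) →g F (n * m))

/-- The `F`-number: the least `n` such that `G → F_n`. -/
noncomputable def etaF (F : SemiringFamily.{u}) {α : Type v} (G : SimpleGraph α) : ℕ :=
  sInf {n : ℕ | Nonempty (G →g F.F n)}

/-- The fractional `F`-number. -/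
noncomputable def etaFrac (F : SemiringFamily.{u}) {α : Type v} (G : SimpleGraph α) : ℝ :=
  sInf {x : ℝ | ∃ n d : ℕ, 1 ≤ d ∧ Nonempty (G →g fracGraph (F.F n) d) ∧ x = (n : ℝ) / d}

/-- The asymptotic `F`-number. -/
noncomputable def etaAsymp (F : SemiringFamily.{u}) {α : Type v} (G : SimpleGraph α) : ℝ :=
  sInf {x : ℝ | ∃ n : ℕ, 1 ≤ n ∧ x = (etaF F (disjPow G n) : ℝ) ^ ((1 : ℝ) / n)}

/-- The orthogonal complement of a set of vertices. -/
def perp {α : Type u} (G : SimpleGraph α) (S : Set α) : Set α :=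
  {v | ∀ s ∈ S, G.Adj v s}

/-- A flat is a set of vertices with `S^{⊥⊥} = S`. -/
def IsFlat {α : Type u} (G : SimpleGraph α) (S : Set α) : Prop :=
  perp G (perp G S) = S

/-- Homomorphic equivalence of two graphs. -/
def HomEquiv {α : Type u} {β : Type v} (G : SimpleGraph α) (H : SimpleGraph β) : Prop :=
  Nonempty (G →g H) ∧ Nonempty (H →g G)

/-- A linear-like semiring family: every flat of `F_n` induces a subgraph with some
clique number `k`, homomorphically equivalent to `F_k`. -/
structure LinearLikeFamily extends SemiringFamily where
  linearLike : ∀ n (S : Set (V n)), IsFlat (F n) S →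
    ∃ k : ℕ, (∃ s : Finset S, ((F n).induce S).IsNClique k s) ∧
      (∀ s : Finset S, ¬ ((F n).induce S).IsNClique (k + 1) s) ∧
      HomEquiv ((F n).induce S) (F k)

universe w

/-! If `G + H → F_n`, let `T` be the common neighbourhood of the image of `G` and `S = T^⊥`.
Both are flats, `G` lands in `S` and `H` in `T`, so their clique numbers `k` and `ℓ` satisfy
`G → F_k` and `H → F_ℓ`. Every vertex of `S` is adjacent to every vertex of `T`, so a `k`-clique
of `S` and an `ℓ`-clique of `T` form a `(k + ℓ)`-clique of `F_n`; as the clique number of `F_n`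
is `n`, this gives `k + ℓ ≤ n`, and `F_ℓ → F_{n - k}`. -/

namespace SimpleGraph

variable {α β : Type*} {G : SimpleGraph α} {H : SimpleGraph β} {n : ℕ}

theorem not_cliqueFree_iff_nonempty_hom :
    ¬ G.CliqueFree n ↔ Nonempty (completeGraph (Fin n) →g G) := by
  rw [not_cliqueFree_iff_top_isContained]
  exact ⟨fun ⟨c⟩ => ⟨c.toHom⟩, fun ⟨f⟩ => ⟨f.toCopy f.injective_of_top_hom⟩⟩

theorem CliqueFree.of_hom (f : G →g H) (h : H.CliqueFree n) : G.CliqueFree n := by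
  by_contra hG
  obtain ⟨c⟩ := not_cliqueFree_iff_nonempty_hom.1 hG
  exact not_cliqueFree_iff_nonempty_hom.2 ⟨f.comp c⟩ h

def Hom.codRestrict (f : G →g H) {s : Set β} (hs : ∀ a, f a ∈ s) : G →g H.induce s :=
  ⟨fun a => ⟨f a, hs a⟩, f.map_adj⟩

end SimpleGraph

section Join

variable {α β γ δ : Type*} {G : SimpleGraph α} {H : SimpleGraph β}

def graphJoinInl (G : SimpleGraph α) (H : SimpleGraph β) : G →g graphJoin G H :=
  ⟨Sum.inl, id⟩

def graphJoinInr (G : SimpleGraph α) (H : SimpleGraph β) : H →g graphJoin G H :=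
  ⟨Sum.inr, id⟩

def graphJoinMap {G' : SimpleGraph γ} {H' : SimpleGraph δ} (f : G →g G') (g : H →g H') :
    graphJoin G H →g graphJoin G' H' where
  toFun := Sum.map f g
  map_rel' {x y} h := by
    rcases x with a | b <;> rcases y with a' | b'
    exacts [f.map_adj h, trivial, trivial, g.map_adj h]

theorem graphJoin_top_top : graphJoin (⊤ : SimpleGraph α) (⊤ : SimpleGraph β) = ⊤ := by
  ext (a | b) (a' | b') <;> simp [graphJoin]

theorem not_cliqueFree_graphJoin {a b : ℕ} (hG : ¬ G.CliqueFree a) (hH : ¬ H.CliqueFree b) :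
    ¬ (graphJoin G H).CliqueFree (a + b) := by
  obtain ⟨f⟩ := not_cliqueFree_iff_nonempty_hom.1 hG
  obtain ⟨g⟩ := not_cliqueFree_iff_nonempty_hom.1 hH
  refine not_cliqueFree_iff_nonempty_hom.2 ⟨(graphJoinMap f g).comp ?_⟩
  exact (Hom.ofLE graphJoin_top_top.ge).comp (Iso.completeGraph finSumFinEquiv.symm).toHom

end Join

section Perp

variable {α : Type*} (G : SimpleGraph α)

theorem subset_perp_perp (S : Set α) : S ⊆ perp G (perp G S) :=
  fun a ha _ hv => (hv a ha).symm

theorem perp_anti {S T : Set α} (h : S ⊆ T) : perp G T ⊆ perp G S :=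
  fun _ hv s hs => hv s (h hs)

theorem isFlat_perp (S : Set α) : IsFlat G (perp G S) :=
  (perp_anti G (subset_perp_perp G S)).antisymm (subset_perp_perp G (perp G S))

theorem perp_empty : perp G ∅ = Set.univ :=
  Set.eq_univ_of_forall fun _ _ h => h.elim

theorem isFlat_univ : IsFlat G Set.univ :=
  perp_empty G ▸ isFlat_perp G ∅

def graphJoinInduceHom {S T : Set α} (h : S ⊆ perp G T) :
    graphJoin (G.induce S) (G.induce T) →g G where
  toFun := Sum.elim Subtype.val Subtype.val
  map_rel' {x y} hxy := by
    rcases x with a | b <;> rcases y with a' | b'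
    exacts [hxy, h a.2 b' b'.2, (h a'.2 b b.2).symm, hxy]

end Perp

namespace SemiringFamily

variable (F : SemiringFamily.{u})

theorem nonempty_hom_of_le {n m : ℕ} (h : n ≤ m) : Nonempty (F.F n →g F.F m) := by
  obtain ⟨d, rfl⟩ := Nat.exists_eq_add_of_le h
  exact ⟨(F.add_hom n d).some.comp (graphJoinInl _ _)⟩

theorem not_cliqueFree_add {n m a b : ℕ} (hn : ¬ (F.F n).CliqueFree a)
    (hm : ¬ (F.F m).CliqueFree b) : ¬ (F.F (n + m)).CliqueFree (a + b) :=
  fun h => not_cliqueFree_graphJoin hn hm (h.of_hom (F.add_hom n m).some)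

theorem not_cliqueFree_self (n : ℕ) : ¬ (F.F n).CliqueFree n := by
  induction n with
  | zero => exact not_cliqueFree_zero
  | succ n ih =>
    have : Nonempty (F.V 1) := F.nonempty_one
    exact F.not_cliqueFree_add ih (by simp [cliqueFree_one])

end SemiringFamily

namespace LinearLikeFamily

/-- The flat `univ` has some clique number `k ≥ n` with `F_k → F_n`, and if `k = n + m` then
`F_{n+m}` contains a clique of size `k + m`. -/
theorem cliqueFree_succ (F : LinearLikeFamily.{u}) (n : ℕ) : (F.F n).CliqueFree (n + 1) := by
  obtain ⟨k, ⟨s, hs⟩, hk, -, ⟨g⟩⟩ := F.linearLike n Set.univ (isFlat_univ _)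
  have hclique : ¬ (F.F n).CliqueFree k :=
    fun h => h.of_hom (Embedding.induce Set.univ).toHom s hs
  have hfree : (F.F n).CliqueFree (k + 1) :=
    CliqueFree.of_hom (Hom.id.codRestrict fun _ => Set.mem_univ _) hk
  obtain ⟨m, rfl⟩ : ∃ m, k = n + m := Nat.exists_eq_add_of_le <| by
    by_contra! hlt
    exact F.not_cliqueFree_self n (hfree.mono hlt)
  have hbig := F.not_cliqueFree_add hclique (F.not_cliqueFree_self m)
  obtain rfl : m = 0 := by
    by_contra hm
    exact hbig ((hfree.mono (by omega)).of_hom ((Embedding.induce _).toHom.comp g))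
  exact hfree

end LinearLikeFamily

/-- Join decomposition: if `G + H → F_n` for a linear-like family, then `n = k + ℓ`
with `G → F_k` and `H → F_ℓ`. -/
theorem linearLike_join_decomposition (F : LinearLikeFamily.{u}) {α : Type v} {β : Type w}
    (G : SimpleGraph α) (H : SimpleGraph β) (n : ℕ)
    (h : Nonempty (graphJoin G H →g F.F n)) :
    ∃ k l : ℕ, k + l = n ∧ Nonempty (G →g F.F k) ∧ Nonempty (H →g F.F l) := by
  obtain ⟨φ⟩ := h
  set T := perp (F.F n) (Set.range fun a => φ (Sum.inl a))
  set S := perp (F.F n) T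
  obtain ⟨k, ⟨s, hs⟩, -, ⟨fk⟩, -⟩ := F.linearLike n S (isFlat_perp _ _)
  obtain ⟨l, ⟨t, ht⟩, -, ⟨fl⟩, -⟩ := F.linearLike n T (isFlat_perp _ _)
  have hkl : k + l ≤ n := by
    by_contra! hlt
    refine not_cliqueFree_graphJoin (fun h => h s hs) (fun h => h t ht) ?_
    exact ((F.cliqueFree_succ n).mono hlt).of_hom (graphJoinInduceHom _ subset_rfl)
  have homG : G →g (F.F n).induce S :=
    (φ.comp (graphJoinInl G H)).codRestrict fun a => subset_perp_perp _ _ ⟨a, rfl⟩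
  have homH : H →g (F.F n).induce T :=
    (φ.comp (graphJoinInr G H)).codRestrict fun b _ ⟨a, ha⟩ =>
      ha ▸ (φ.map_adj (show (graphJoin G H).Adj (Sum.inl a) (Sum.inr b) from trivial)).symm
  obtain ⟨ψ⟩ := F.nonempty_hom_of_le (show l ≤ n - k by omega)
  exact ⟨k, n - k, by omega, ⟨fk.comp homG⟩, ⟨ψ.comp (fl.comp homH)⟩⟩
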